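/- Let (X, r) be a Φ-algebra over T0 spaces. Then r : Φ(X) → X preserves suprema of directed families: for every directed family 𝒜 of open filters, r(⋃𝒜) = ⋁ r(𝒜), where the supremum on the right is taken in the complete lattice (X, specialization order). -/

import Mathlib

open Set TopologicalSpace

variable {X Y : Type*}

/-- An open filter on a topological space: a lattice-theoretic filter of the
frame of open sets (so it contains `univ` and satisfies
`A ∩ B ∈ v ↔ A ∈ v ∧ B ∈ v` for open `A`, `B`). -/
def IsOpenFilter [TopologicalSpace X] (v : Set (Set X)) : Prop :=
  (∀ A ∈ v, IsOpen A) ∧ Set.univ ∈ v ∧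
    ∀ A B : Set X, IsOpen A → IsOpen B → (A ∩ B ∈ v ↔ A ∈ v ∧ B ∈ v)

/-- `Φ(X)`: the set of open filters of `X`, ordered by inclusion. -/
abbrev OF (X : Type*) [TopologicalSpace X] := {v : Set (Set X) // IsOpenFilter v}

/-- The basic open sets `φ(A) = {v ∈ Φ(X) | A ∈ v}` of the filter space. -/
def phi [TopologicalSpace X] (A : Set X) : Set (OF X) := {v : OF X | A ∈ v.1}

/-- The topology on `Φ(X)` generated by the sets `φ(A)`, `A` open. -/
instance OF.topologicalSpace (X : Type*) [TopologicalSpace X] : TopologicalSpace (OF X) :=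
  generateFrom {S | ∃ A : Set X, IsOpen A ∧ S = phi A}

lemma isOpen_phi [TopologicalSpace X] {A : Set X} (hA : IsOpen A) : IsOpen (phi A) :=
  TopologicalSpace.GenerateOpen.basic _ ⟨A, hA, rfl⟩

lemma phi_univ [TopologicalSpace X] : phi (Set.univ : Set X) = Set.univ :=
  Set.eq_univ_of_forall fun v => v.2.2.1

lemma phi_inter [TopologicalSpace X] {A B : Set X} (hA : IsOpen A) (hB : IsOpen B) :
    phi (A ∩ B) = phi A ∩ phi B :=
  Set.ext fun v => v.2.2.2 A B hA hB

/-- The open-neighborhood filter `[x]` of a point: the unit `η_X`. -/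
def etaOF [TopologicalSpace X] (x : X) : OF X :=
  ⟨{A | IsOpen A ∧ x ∈ A}, fun _ hA => hA.1, ⟨isOpen_univ, mem_univ x⟩,
    fun A B hA hB =>
      ⟨fun h => ⟨⟨hA, h.2.1⟩, ⟨hB, h.2.2⟩⟩, fun h => ⟨hA.inter hB, h.1.2, h.2.2⟩⟩⟩

/-- The open filter `[S] = {B open | S ⊆ B}` of a subset `S`. -/
def nbhdOF [TopologicalSpace X] (S : Set X) : OF X :=
  ⟨{B | IsOpen B ∧ S ⊆ B}, fun _ hA => hA.1, ⟨isOpen_univ, subset_univ S⟩,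
    fun A B hA hB =>
      ⟨fun h => ⟨⟨hA, h.2.trans inter_subset_left⟩, ⟨hB, h.2.trans inter_subset_right⟩⟩,
       fun h => ⟨hA.inter hB, subset_inter h.1.2 h.2.2⟩⟩⟩

/-- The action of `Φ` on a continuous map: `Φ(f)(u) = {B open | f⁻¹(B) ∈ u}`. -/
def mapOF [TopologicalSpace X] [TopologicalSpace Y] (f : X → Y) (hf : Continuous f) :
    OF X → OF Y := fun u =>
  ⟨{B | IsOpen B ∧ f ⁻¹' B ∈ u.1}, fun _ hA => hA.1,
    ⟨isOpen_univ, by simpa using u.2.2.1⟩,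
    fun A B hA hB => by
      constructor
      · intro h
        have := (u.2.2.2 (f ⁻¹' A) (f ⁻¹' B) (hA.preimage hf) (hB.preimage hf)).1
          (by simpa [Set.preimage_inter] using h.2)
        exact ⟨⟨hA, this.1⟩, ⟨hB, this.2⟩⟩
      · intro h
        refine ⟨hA.inter hB, ?_⟩
        rw [Set.preimage_inter]
        exact (u.2.2.2 _ _ (hA.preimage hf) (hB.preimage hf)).2 ⟨h.1.2, h.2.2⟩⟩

/-- The multiplication `μ_X(α) = {A open | φ(A) ∈ α}` of the open filter monad. -/
def muOF [TopologicalSpace X] : OF (OF X) → OF X := fun α =>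
  ⟨{A | IsOpen A ∧ phi A ∈ α.1}, fun _ hA => hA.1,
    ⟨isOpen_univ, by rw [phi_univ]; exact α.2.2.1⟩,
    fun A B hA hB => by
      constructor
      · intro h
        have := (α.2.2.2 (phi A) (phi B) (isOpen_phi hA) (isOpen_phi hB)).1
          (by rw [← phi_inter hA hB]; exact h.2)
        exact ⟨⟨hA, this.1⟩, ⟨hB, this.2⟩⟩
      · intro h
        exact ⟨hA.inter hB, by
          rw [phi_inter hA hB]
          exact (α.2.2.2 _ _ (isOpen_phi hA) (isOpen_phi hB)).2 ⟨h.1.2, h.2.2⟩⟩⟩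

/-- The specialization (pre)order of a topological space:
`x ≤ y` iff every open set containing `x` contains `y`. -/
def sOrd [TopologicalSpace X] (x y : X) : Prop :=
  ∀ A : Set X, IsOpen A → x ∈ A → y ∈ A

/-! Open sets of `Φ(X)` are Scott open for inclusion: each basic set `φ(A)` is an upper set
that a directed union can only enter through one of its members, since that union is itself an
open filter and hence the least upper bound. Both properties survive finite intersections and
arbitrary unions. So the preimage under the continuous `r` of an open set of `X` is Scott open,
which is exactly monotonicity of `r` and preservation of directed suprema for the specialization
order. -/

lemma isOpenFilter_biUnion [TopologicalSpace X] {𝒜 : Set (OF X)} (hne : 𝒜.Nonempty)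
    (hdir : DirectedOn (· ≤ ·) 𝒜) : IsOpenFilter (⋃ v ∈ 𝒜, v.1) := by
  refine ⟨?_, ?_, fun A B hA hB => ⟨fun h => ?_, fun ⟨hAU, hBU⟩ => ?_⟩⟩
  · simp only [mem_iUnion₂]
    rintro A ⟨v, -, hAv⟩
    exact v.2.1 A hAv
  · obtain ⟨v, hv⟩ := hne
    exact mem_biUnion hv v.2.2.1
  · obtain ⟨v, hv, hABv⟩ := mem_iUnion₂.1 h
    obtain ⟨hAv, hBv⟩ := (v.2.2.2 A B hA hB).1 hABv
    exact ⟨mem_biUnion hv hAv, mem_biUnion hv hBv⟩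
  · obtain ⟨v₁, hv₁, hAv₁⟩ := mem_iUnion₂.1 hAU
    obtain ⟨v₂, hv₂, hBv₂⟩ := mem_iUnion₂.1 hBU
    obtain ⟨w, hw, hv₁w, hv₂w⟩ := hdir v₁ hv₁ v₂ hv₂
    exact mem_biUnion hw ((w.2.2.2 A B hA hB).2 ⟨hv₁w hAv₁, hv₂w hBv₂⟩)

namespace OF

variable [TopologicalSpace X]

lemma isLUB_biUnion {𝒜 : Set (OF X)} (hU : IsOpenFilter (⋃ v ∈ 𝒜, v.1)) :
    IsLUB 𝒜 ⟨⋃ v ∈ 𝒜, v.1, hU⟩ :=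
  ⟨fun _ hv => subset_biUnion_of_mem hv, fun _ hw => iUnion₂_subset hw⟩

lemma isUpperSet_of_isOpen {S : Set (OF X)} (hS : IsOpen S) : IsUpperSet S := by
  induction hS with
  | basic s hs =>
    obtain ⟨A, -, rfl⟩ := hs
    exact fun v w hvw hAv => hvw hAv
  | univ => exact isUpperSet_univ
  | inter s t _ _ hs ht => exact hs.inter ht
  | sUnion 𝒮 _ h𝒮 => exact isUpperSet_sUnion h𝒮

lemma dirSupInacc_of_isOpen {S : Set (OF X)} (hS : IsOpen S) : DirSupInacc S := by
  induction hS with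
  | basic s hs =>
    obtain ⟨A, -, rfl⟩ := hs
    intro 𝒜 hne hdir a ha hAa
    obtain rfl := (isLUB_biUnion (isOpenFilter_biUnion hne hdir)).unique ha
    obtain ⟨v, hv, hAv⟩ := mem_iUnion₂.1 hAa
    exact ⟨v, hv, hAv⟩
  | univ => exact DirSupInacc.univ
  | inter s t _ _ hs ht => exact hs.inter ht
  | sUnion 𝒮 _ h𝒮 => exact DirSupInacc.sUnion h𝒮

end OF

theorem r_preserves_directed_sups_general [TopologicalSpace X]
    (r : OF X → X) (hc : Continuous r)
    (𝒜 : Set (OF X)) (hne : 𝒜.Nonempty) (hdir : DirectedOn (· ≤ ·) 𝒜) :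
    ∃ hU : IsOpenFilter (⋃ v ∈ 𝒜, v.1),
      (∀ v ∈ 𝒜, sOrd (r v) (r (⟨⋃ v ∈ 𝒜, v.1, hU⟩ : OF X))) ∧
      ∀ y : X, (∀ v ∈ 𝒜, sOrd (r v) y) →
        sOrd (r (⟨⋃ v ∈ 𝒜, v.1, hU⟩ : OF X)) y := by
  have hU := isOpenFilter_biUnion hne hdir
  have hlub := OF.isLUB_biUnion hU
  refine ⟨hU, fun v hv A hA hrv => ?_, fun y hy A hA hrU => ?_⟩
  · exact OF.isUpperSet_of_isOpen (hA.preimage hc) (hlub.1 hv) hrv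
  · obtain ⟨v, hv, hrv⟩ := OF.dirSupInacc_of_isOpen (hA.preimage hc) hne hdir hlub hrU
    exact hy v hv A hA hrv

/-- the structure map of a `Φ`-algebra over `T0` spaces preserves
directed suprema: for a directed family `𝒜` of open filters, `r(⋃𝒜)` is the
supremum of `r(𝒜)` in the specialization order. -/
theorem r_preserves_directed_sups [TopologicalSpace X] [T0Space X]
    (r : OF X → X) (hc : Continuous r)
    (hunit : ∀ x : X, r (etaOF x) = x)
    (hassoc : ∀ α : OF (OF X), r (mapOF r hc α) = r (muOF α))
    (𝒜 : Set (OF X)) (hne : 𝒜.Nonempty) (hdir : DirectedOn (· ≤ ·) 𝒜) :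
    ∃ hU : IsOpenFilter (⋃ v ∈ 𝒜, v.1),
      (∀ v ∈ 𝒜, sOrd (r v) (r (⟨⋃ v ∈ 𝒜, v.1, hU⟩ : OF X))) ∧
      ∀ y : X, (∀ v ∈ 𝒜, sOrd (r v) y) →
        sOrd (r (⟨⋃ v ∈ 𝒜, v.1, hU⟩ : OF X)) y :=
  r_preserves_directed_sups_general r hc 𝒜 hne hdir
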